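/- Consider the instance with n players and m buses where d(u,t) = d(u,v) = 0 for u,v ∈ {1,…,n−m}, and d(u,t) = 1, d(u,v) = ε for distinct u,v ∈ {n−m+1,…,n} (with cross distances induced as shortest paths). The outcome σ* placing players n−m+1,…,n all on one bus and the rest on another has U(σ*) = m + (m(m−1)/2)·ε, while the outcome σ placing each of players n−m+1,…,n on a distinct bus (each alone among the last m players) and the first n−m players paying 2 each has U(σ) = m + 2(n−m) = 2n − m. The ratio (2n−m)/(m + (m(m−1)/2)ε) tends to 2n/m − 1 as ε → 0. -/

import Mathlib

/-!
Costs are computed bus by bus, by induction on the list of stops. In a pseudometric space a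
point at distance `0` from `t` is indistinguishable from `t`, so the first `n - m` players cost
nothing on a bus of their own, and on a bus whose last stop `c` is at distance `1` from `t`
each of them pays the detour `t → c → t` of length `2`. On the bus of the last `m` players the
rider boarding `k` stops before the last one pays `kε + 1`, and summing gives `m + m(m-1)/2 · ε`.
-/

open Finset

/-- Length of a bus route that visits the points of `l` in order and then ends at the
destination `t` (the initial segment from the depot is ignored). -/
noncomputable def routeLen {V : Type*} [PseudoMetricSpace V] (t : V) (l : List V) : ℝ :=
  ∑ i ∈ Finset.range l.length, dist (l.getD i t) (l.getD (i + 1) t)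

section Routes

variable {V : Type*} [PseudoMetricSpace V] (t : V)

/-- The rider boarding at stop `i` pays the remaining route length `routeLen t (l.drop i)`. -/
noncomputable def busCost (l : List V) : ℝ :=
  ∑ i ∈ range l.length, routeLen t (l.drop i)

variable {t}

lemma dist_eq_of_dist_eq_zero {a : V} (b : V) (ha : dist a t = 0) : dist a b = dist t b := by
  have h := abs_dist_sub_le a t b
  rw [ha] at h
  exact sub_eq_zero.mp (abs_nonpos_iff.mp h)

@[simp]
lemma routeLen_nil : routeLen t ([] : List V) = 0 := by
  simp [routeLen]

lemma routeLen_cons (a : V) (l : List V) :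
    routeLen t (a :: l) = dist a (l.getD 0 t) + routeLen t l := by
  rw [routeLen, List.length_cons, sum_range_succ', add_comm]
  simp [routeLen]

@[simp]
lemma routeLen_singleton (a : V) : routeLen t [a] = dist a t := by
  simp [routeLen_cons]

lemma busCost_eq_sum_range {l : List V} {k : ℕ} (hk : l.length = k) :
    ∑ i ∈ range k, routeLen t (l.drop i) = busCost t l := by
  subst hk; rfl

@[simp]
lemma busCost_nil : busCost t ([] : List V) = 0 := by
  simp [busCost]

lemma busCost_cons (a : V) (l : List V) :
    busCost t (a :: l) = routeLen t (a :: l) + busCost t l := by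
  rw [busCost, List.length_cons, sum_range_succ', add_comm]
  simp [busCost]

lemma routeLen_eq_zero {l : List V} (hl : ∀ a ∈ l, dist a t = 0) : routeLen t l = 0 := by
  induction l with
  | nil => simp
  | cons a l ih =>
    have hrest := fun b hb => hl b (List.mem_cons_of_mem a hb)
    rw [routeLen_cons, ih hrest, dist_eq_of_dist_eq_zero _ (hl a List.mem_cons_self)]
    cases l with
    | nil => simp
    | cons b l => simpa [dist_comm] using hrest b List.mem_cons_self

lemma busCost_eq_zero {l : List V} (hl : ∀ a ∈ l, dist a t = 0) : busCost t l = 0 :=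
  sum_eq_zero fun _ _ => routeLen_eq_zero fun a ha => hl a (List.mem_of_mem_drop ha)

lemma routeLen_cons_append_singleton {a : V} {l : List V} (c : V)
    (hl : ∀ b ∈ a :: l, dist b t = 0) : routeLen t (a :: (l ++ [c])) = 2 * dist c t := by
  induction l generalizing a with
  | nil =>
    simp [routeLen_cons, dist_eq_of_dist_eq_zero c (hl a List.mem_cons_self), dist_comm]
    ring
  | cons b l ih =>
    rw [List.cons_append, routeLen_cons, ih fun d hd => hl d (List.mem_cons_of_mem a hd)]
    simp [dist_eq_of_dist_eq_zero b (hl a List.mem_cons_self),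
      dist_comm t b, hl b (by simp)]

lemma busCost_append_singleton {l : List V} (c : V) (hl : ∀ a ∈ l, dist a t = 0) :
    busCost t (l ++ [c]) = (2 * l.length + 1) * dist c t := by
  induction l with
  | nil => simp [busCost_cons]
  | cons a l ih =>
    rw [List.cons_append, busCost_cons, routeLen_cons_append_singleton c hl,
      ih fun b hb => hl b (List.mem_cons_of_mem a hb)]
    simp only [List.length_cons, Nat.cast_succ]
    ring

variable {ε r : ℝ}

lemma routeLen_cons_of_pairwise {a : V} {l : List V}
    (hp : (a :: l).Pairwise fun b c => dist b c = ε) (ht : ∀ b ∈ a :: l, dist b t = r) :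
    routeLen t (a :: l) = l.length * ε + r := by
  induction l generalizing a with
  | nil => simpa using ht a List.mem_cons_self
  | cons b l ih =>
    obtain ⟨hhead, htail⟩ := List.pairwise_cons.mp hp
    rw [routeLen_cons, ih htail fun d hd => ht d (List.mem_cons_of_mem a hd),
      List.getD_cons_zero, hhead b List.mem_cons_self]
    simp only [List.length_cons, Nat.cast_succ]
    ring

lemma busCost_of_pairwise {l : List V}
    (hp : l.Pairwise fun b c => dist b c = ε) (ht : ∀ b ∈ l, dist b t = r) :
    busCost t l = l.length * r + l.length * (l.length - 1) / 2 * ε := by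
  induction l with
  | nil => simp
  | cons a l ih =>
    rw [busCost_cons, routeLen_cons_of_pairwise hp ht,
      ih (List.pairwise_cons.mp hp).2 fun d hd => ht d (List.mem_cons_of_mem a hd)]
    simp only [List.length_cons, Nat.cast_succ]
    ring

end Routes

lemma tendsto_div_add_mul_nhdsGT_zero {a b : ℝ} (c : ℝ) (hb : b ≠ 0) :
    Filter.Tendsto (fun e : ℝ => a / (b + c * e)) (nhdsWithin 0 (Set.Ioi 0)) (nhds (a / b)) := by
  have hcont : ContinuousAt (fun e : ℝ => a / (b + c * e)) 0 :=
    continuousAt_const.div (by fun_prop) (by simpa using hb)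
  simpa using hcont.continuousWithinAt.tendsto

/-- in the instance where `d(u,t) = d(u,v) = 0` for players
`u,v ∈ {1,…,n-m}`, `d(u,t) = 1` and `d(u,v) = ε` for distinct `u,v ∈ {n-m+1,…,n}`, and
cross distances equal `1`, the outcome `σ*` placing players `n-m+1,…,n` all on one bus and
the rest on another has `U(σ*) = m + (m(m-1)/2)·ε`, while the outcome `σ` placing each of
players `n-m+1,…,n` on a distinct bus (with the first `n-m` players each paying `2`) has
`U(σ) = m + 2(n-m) = 2n - m`; and the ratio `(2n-m)/(m + (m(m-1)/2)ε)` tends to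
`2n/m - 1` as `ε → 0⁺`. -/
theorem stmt13 {V : Type*} [PseudoMetricSpace V] {n m : ℕ} (hm : 1 ≤ m) (hmn : m ≤ n)
    (ε : ℝ) (x : Fin n → V) (t : V)
    (hsmallt : ∀ u : Fin n, (u : ℕ) < n - m → dist (x u) t = 0)
    (hbigt : ∀ u : Fin n, n - m ≤ (u : ℕ) → dist (x u) t = 1)
    (hbig : ∀ u v : Fin n, n - m ≤ (u : ℕ) → n - m ≤ (v : ℕ) → u ≠ v →
      dist (x u) (x v) = ε) :
    -- the route of the bus carrying the first `n-m` players
    let smalls : List V :=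
      (List.finRange (n - m)).map (fun j : Fin (n - m) => x (Fin.castLE (Nat.sub_le n m) j))
    -- the route of the bus of `σ*` carrying the last `m` players
    let bigs : List V :=
      (List.finRange m).map (fun j : Fin m => x ⟨n - m + (j : ℕ), by have := j.isLt; omega⟩)
    -- U(σ*) = m + (m(m-1)/2)·ε
    ((∑ i ∈ Finset.range (n - m), routeLen t (smalls.drop i)) +
        (∑ i ∈ Finset.range m, routeLen t (bigs.drop i)) =
      (m : ℝ) + ((m : ℝ) * ((m : ℝ) - 1) / 2) * ε) ∧
    -- U(σ) = 2n - m, where the first `n-m` players share a bus also visiting player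
    -- `n-m+1` last, and each remaining player of `{n-m+2,…,n}` rides alone
    ((∑ i ∈ Finset.range ((smalls ++ [x ⟨n - m, by omega⟩]).length),
          routeLen t ((smalls ++ [x ⟨n - m, by omega⟩]).drop i)) +
        (∑ j : Fin m, if (j : ℕ) = 0 then 0 else
          routeLen t [x ⟨n - m + (j : ℕ), by have := j.isLt; omega⟩]) =
      2 * (n : ℝ) - (m : ℝ)) ∧
    Filter.Tendsto
      (fun e : ℝ => (2 * (n : ℝ) - (m : ℝ)) / ((m : ℝ) + ((m : ℝ) * ((m : ℝ) - 1) / 2) * e))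
      (nhdsWithin 0 (Set.Ioi 0)) (nhds (2 * (n : ℝ) / (m : ℝ) - 1)) := by
  intro smalls bigs
  have hsmalls : ∀ a ∈ smalls, dist a t = 0 := by
    simp only [smalls, List.mem_map, List.mem_finRange, true_and, forall_exists_index]
    rintro _ j rfl
    exact hsmallt _ j.isLt
  have hbigs : ∀ a ∈ bigs, dist a t = 1 := by
    simp only [bigs, List.mem_map, List.mem_finRange, true_and, forall_exists_index]
    rintro _ j rfl
    exact hbigt _ (Nat.le_add_right _ _)
  have hbigs_pairwise : bigs.Pairwise fun a b => dist a b = ε :=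
    List.pairwise_map.mpr <| (List.nodup_finRange m).imp fun hne =>
      hbig _ _ (Nat.le_add_right _ _) (Nat.le_add_right _ _) (by simpa [Fin.ext_iff] using hne)
  refine ⟨?_, ?_, ?_⟩
  · rw [busCost_eq_sum_range (by simp [smalls]), busCost_eq_sum_range (by simp [bigs]),
      busCost_eq_zero hsmalls, busCost_of_pairwise hbigs_pairwise hbigs]
    simp [bigs]
  · rw [busCost_eq_sum_range rfl, busCost_append_singleton _ hsmalls, hbigt _ le_rfl]
    obtain ⟨k, rfl⟩ : ∃ k, m = k + 1 := ⟨m - 1, by omega⟩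
    rw [Fin.sum_univ_succ]
    simp [hbigt, smalls, Nat.cast_sub hmn]
    ring
  · convert tendsto_div_add_mul_nhdsGT_zero _ (Nat.cast_ne_zero.mpr (by omega : m ≠ 0)) using 2
    field_simp
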